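/- arXiv:0812.2042 — 7 statements merged into one kernel-verified Lean document; each statement's English description precedes it below -/
import Mathlib

section
/- Let h : 𝕋 → ℂ satisfy the quadrature mirror filter equation |h(z)|² + |h(−z)|² = 2 a.e., and suppose the Ruelle operator S_h on L²(𝕋), (S_h f)(z) = h(z)f(z²), has a unit eigenvector f with eigenvalue λ, |λ| = 1. Then |f(z)| = 1 for almost every z ∈ 𝕋. -/
open MeasureTheory

/-! Write `F = ‖f‖` and `c = 1/2`. Taking norms in the eigenvalue equation at `z` and
`z + c` (which have the same double) gives `F z ^ 2 + F (z + c) ^ 2 = 2 F (2z) ^ 2`, hence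
`F z + F (z + c) ≤ 2 F (2z)`. Both sides have the same integral because translation and
doubling preserve Haar measure, so equality holds a.e., and equality in the power-mean
inequality forces `F z = F (2z)`. By ergodicity of doubling `F` is a.e. constant, and
`‖f‖₂ = 1` pins the constant to `1`. -/

theorem add_le_two_mul_of_sq_add_sq_eq {a b u : ℝ} (hu : 0 ≤ u)
    (h : a ^ 2 + b ^ 2 = 2 * u ^ 2) : a + b ≤ 2 * u :=
  (abs_le_of_sq_le_sq' (by nlinarith [sq_nonneg (a - b)]) (by positivity)).2

theorem eq_of_add_eq_two_mul_of_sq_add_sq_eq {a b u : ℝ} (hsum : a + b = 2 * u)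
    (hsq : a ^ 2 + b ^ 2 = 2 * u ^ 2) : a = u := by
  have : (a - u) ^ 2 + (b - u) ^ 2 = 0 := by linear_combination hsq - 2 * u * hsum
  nlinarith [sq_nonneg (a - u), sq_nonneg (b - u)]

namespace MeasureTheory

variable {α : Type*} [MeasurableSpace α] {μ : Measure α}

theorem MeasurePreserving.integral_comp_of_aestronglyMeasurable {E β : Type*}
    [NormedAddCommGroup E] [NormedSpace ℝ E] [MeasurableSpace β] {ν : Measure β} {T : α → β}
    (hT : MeasurePreserving T μ ν) {F : β → E} (hF : AEStronglyMeasurable F ν) :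
    ∫ x, F (T x) ∂μ = ∫ y, F y ∂ν := by
  rw [← integral_map hT.measurable.aemeasurable (by rwa [hT.map_eq]), hT.map_eq]

theorem ae_add_comp_eq_two_mul_comp_of_ae_le {S T : α → α} (hS : MeasurePreserving S μ μ)
    (hT : MeasurePreserving T μ μ) {F : α → ℝ} (hF : Integrable F μ)
    (hle : ∀ᵐ x ∂μ, F x + F (S x) ≤ 2 * F (T x)) :
    ∀ᵐ x ∂μ, F x + F (S x) = 2 * F (T x) := by
  have hFS : Integrable (fun x ↦ F (S x)) μ := (hS.integrable_comp hF.1).2 hF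
  have hFT : Integrable (fun x ↦ F (T x)) μ := (hT.integrable_comp hF.1).2 hF
  refine (integral_eq_iff_of_ae_le (hF.add hFS) (hFT.const_mul 2) hle).1 ?_
  rw [Pi.add_def, integral_add hF hFS, integral_const_mul,
    hS.integral_comp_of_aestronglyMeasurable hF.1, hT.integral_comp_of_aestronglyMeasurable hF.1]
  ring

theorem ae_eq_one_of_ae_eq_const_of_integral_sq [IsProbabilityMeasure μ] {F : α → ℝ}
    (hF : ∀ x, 0 ≤ F x) {k : ℝ} (hk : F =ᵐ[μ] fun _ ↦ k)
    (hsq : ∫ x, F x ^ 2 ∂μ = 1) :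
    ∀ᵐ x ∂μ, F x = 1 := by
  have hk_sq : k ^ 2 = 1 := by
    rw [← hsq, integral_congr_ae (hk.mono fun x hx ↦ by rw [hx])]
    simp
  have hk_nonneg : 0 ≤ k := by
    obtain ⟨x, hx⟩ := hk.exists
    exact (hF x).trans_eq hx
  have hk_one : k = 1 := by nlinarith
  exact hk.mono fun x hx ↦ hx.trans hk_one

end MeasureTheory

namespace AddCircle

theorem two_nsmul_add_half_period {T : ℝ} (z : AddCircle T) :
    (2 : ℕ) • (z + ((T / 2 : ℝ) : AddCircle T)) = (2 : ℕ) • z := by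
  rw [smul_add, ← coe_nsmul, nsmul_eq_mul, Nat.cast_two, mul_div_cancel₀ _ two_ne_zero,
    coe_period, add_zero]

variable {T : ℝ} [Fact (0 < T)]

theorem comp_two_nsmul_ae_eq_self {p F : AddCircle T → ℝ} (hF : Integrable F)
    (hF_nonneg : ∀ z, 0 ≤ F z)
    (hp : ∀ᵐ z, p z ^ 2 + p (z + ((T / 2 : ℝ) : AddCircle T)) ^ 2 = 2)
    (hpF : ∀ᵐ z, p z * F ((2 : ℕ) • z) = F z) :
    ∀ᵐ z, F ((2 : ℕ) • z) = F z := by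
  set c : AddCircle T := ((T / 2 : ℝ) : AddCircle T)
  have hdouble : MeasurePreserving (fun z : AddCircle T ↦ (2 : ℕ) • z) volume volume :=
    (ergodic_nsmul one_lt_two).toMeasurePreserving
  have htrans : MeasurePreserving (· + c) (volume : Measure (AddCircle T)) volume :=
    measurePreserving_add_right volume c
  have hpF_shift : ∀ᵐ z, p (z + c) * F ((2 : ℕ) • z) = F (z + c) :=
    (htrans.quasiMeasurePreserving.ae hpF).mono fun z hz ↦ by
      rwa [two_nsmul_add_half_period] at hz
  have hsq : ∀ᵐ z, F z ^ 2 + F (z + c) ^ 2 = 2 * F ((2 : ℕ) • z) ^ 2 := by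
    filter_upwards [hp, hpF, hpF_shift] with z hpz h₁ h₂
    rw [← h₁, ← h₂, ← hpz]
    ring
  have hsum : ∀ᵐ z, F z + F (z + c) = 2 * F ((2 : ℕ) • z) :=
    ae_add_comp_eq_two_mul_comp_of_ae_le htrans hdouble hF <|
      hsq.mono fun z hz ↦ add_le_two_mul_of_sq_add_sq_eq (hF_nonneg _) hz
  filter_upwards [hsum, hsq] with z h₁ h₂
  exact (eq_of_add_eq_two_mul_of_sq_add_sq_eq h₁ h₂).symm

end AddCircle

instance : IsProbabilityMeasure (volume : Measure UnitAddCircle) :=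
  ⟨UnitAddCircle.measure_univ⟩

theorem stmt_5_general (h : AddCircle (1 : ℝ) → ℂ)
    (hfilter : ∀ᵐ z : AddCircle (1 : ℝ),
      ‖h z‖ ^ 2 + ‖h (z + (((1 : ℝ) / 2 : ℝ) : AddCircle (1 : ℝ)))‖ ^ 2 = 2)
    (f : AddCircle (1 : ℝ) → ℂ) (hf : MemLp f 2 volume)
    (hnorm : ∫ z, ‖f z‖ ^ 2 = 1)
    (lam : ℂ) (hlam : ‖lam‖ = 1)
    (heig : ∀ᵐ z : AddCircle (1 : ℝ), h z * f ((2 : ℕ) • z) = lam * f z) :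
    ∀ᵐ z : AddCircle (1 : ℝ), ‖f z‖ = 1 := by
  have hnorm_eig : ∀ᵐ z, ‖h z‖ * ‖f ((2 : ℕ) • z)‖ = ‖f z‖ :=
    heig.mono fun z hz ↦ by simpa [norm_mul, hlam] using congrArg norm hz
  have hinv : (fun z ↦ ‖f ((2 : ℕ) • z)‖) =ᵐ[volume] fun z ↦ ‖f z‖ :=
    AddCircle.comp_two_nsmul_ae_eq_self (F := fun z ↦ ‖f z‖) (hf.integrable one_le_two).norm
      (fun _ ↦ norm_nonneg _) hfilter hnorm_eig
  obtain ⟨k, hk⟩ := (AddCircle.ergodic_nsmul one_lt_two).ae_eq_const_of_ae_eq_comp_ae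
    hf.aestronglyMeasurable.norm hinv
  exact ae_eq_one_of_ae_eq_const_of_integral_sq (fun _ ↦ norm_nonneg _) hk hnorm

/-- If the Ruelle operator `S_h f (z) = h z * f (z²)` on `L²(𝕋)` associated to a
quadrature mirror filter `h` has a unit eigenvector `f` with eigenvalue `λ` of
modulus one, then `|f| = 1` almost everywhere. -/
theorem stmt_5 (h : AddCircle (1 : ℝ) → ℂ) (hmeas : Measurable h)
    (hfilter : ∀ᵐ z : AddCircle (1 : ℝ),
      ‖h z‖ ^ 2 + ‖h (z + (((1 : ℝ) / 2 : ℝ) : AddCircle (1 : ℝ)))‖ ^ 2 = 2)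
    (f : AddCircle (1 : ℝ) → ℂ) (hf : MemLp f 2 volume)
    (hnorm : ∫ z, ‖f z‖ ^ 2 = 1)
    (lam : ℂ) (hlam : ‖lam‖ = 1)
    (heig : ∀ᵐ z : AddCircle (1 : ℝ), h z * f ((2 : ℕ) • z) = lam * f z) :
    ∀ᵐ z : AddCircle (1 : ℝ), ‖f z‖ = 1 :=
  stmt_5_general h hfilter f hf hnorm lam hlam heig
end

section
/- Let H be a Hilbert space, π a unitary representation of a countable abelian group Γ on H, and δ a unitary operator on H with δ⁻¹ π_γ δ = π_{α(γ)} for an injective endomorphism α of Γ. Suppose v ∈ H is an eigenvector of δ, and suppose that for every w ∈ H the function γ ↦ ⟨π_γ w, w⟩ vanishes at infinity on Γ. Then ⟨π_γ v, v⟩ = 0 for all γ ≠ 0; equivalently, the vectors {π_γ v}_{γ ∈ Γ} are pairwise orthogonal. -/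
/-!
Since `δ` is unitary its eigenvalue has modulus one, so conjugating by `δ` shows that the
coefficient `f σ = ⟪π σ v, v⟫` is `α`-invariant. If `f γ ≠ 0`, the `α`-orbit of `γ` cannot be
infinite, as `f` is constant on it and vanishes at infinity; injectivity of `α` then makes `γ`
periodic, so `γ` lies in every `range αⁿ`, whence `γ = 1`.
-/

open Filter Function Topology

namespace Function

variable {α : Type*} {f : α → α} {x : α}

theorem periodicPts_subset_iInter_range_iterate : periodicPts f ⊆ ⋂ n, Set.range f^[n] :=
  fun _ ⟨_, hd, hx⟩ => Set.mem_iInter.2 fun n =>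
    periodicPts_subset_range (mk_mem_periodicPts hd (hx.iterate n))

theorem Injective.mem_periodicPts_of_not_injective_iterate (hf : Injective f)
    (hx : ¬ Injective (f^[·] x)) : x ∈ periodicPts f := by
  obtain ⟨m, n, heq, hne⟩ : ∃ m n, f^[m] x = f^[n] x ∧ m ≠ n := by
    simpa [Injective] using hx
  rcases hne.lt_or_gt with hlt | hlt
  · exact mk_mem_periodicPts (by lia) (iterate_cancel hf heq.symm)
  · exact mk_mem_periodicPts (by lia) (iterate_cancel hf heq)

theorem not_injective_iterate_of_tendsto_cofinite {β : Type*} [TopologicalSpace β] [T2Space β]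
    {φ : α → β} {b : β} (hφ : Tendsto φ cofinite (𝓝 b)) (hφf : ∀ y, φ (f y) = φ y)
    (hx : φ x ≠ b) : ¬ Injective (f^[·] x) := by
  intro hinj
  have horbit : ∀ n, φ (f^[n] x) = φ x := fun n => by
    induction n with
    | zero => rfl
    | succ n ih => rw [iterate_succ_apply', hφf, ih]
  have hlim : Tendsto (fun n => φ (f^[n] x)) atTop (𝓝 b) :=
    hφ.comp (Nat.cofinite_eq_atTop ▸ hinj.tendsto_cofinite)
  simp only [horbit, tendsto_const_nhds_iff] at hlim
  exact hx hlim

end Function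

theorem LinearIsometry.norm_eq_one_of_apply_eq_smul {𝕜 E : Type*} [NormedField 𝕜]
    [SeminormedAddCommGroup E] [NormedSpace 𝕜 E] (δ : E →ₗᵢ[𝕜] E) {v : E} {c : 𝕜}
    (hv : ‖v‖ ≠ 0) (hδv : δ v = c • v) : ‖c‖ = 1 := by
  have h := δ.norm_map v
  rw [hδv, norm_smul] at h
  exact (mul_eq_right₀ hv).1 h

theorem LinearIsometryEquiv.inner_symm_apply_apply_eq {𝕜 H F : Type*} [RCLike 𝕜]
    [SeminormedAddCommGroup H] [InnerProductSpace 𝕜 H] [FunLike F H H] [LinearMapClass F 𝕜 H H]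
    (δ : H ≃ₗᵢ[𝕜] H) (T : F) {v : H} {c : 𝕜} (hc : ‖c‖ = 1) (hδv : δ v = c • v) :
    inner 𝕜 (δ.symm (T (δ v))) v = inner 𝕜 (T v) v := by
  rw [← δ.inner_map_map, δ.apply_symm_apply, hδv, _root_.map_smul, inner_smul_left,
    inner_smul_right, ← mul_assoc, RCLike.conj_mul, hc]
  simp

theorem stmt_8_general {H : Type*} [NormedAddCommGroup H] [InnerProductSpace ℂ H]
    {Γ : Type*} [CommGroup Γ]
    (π : Γ →* (H ≃ₗᵢ[ℂ] H)) (α : Γ →* Γ) (hinj : Function.Injective α)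
    (hcap : (⋂ n : ℕ, Set.range ((⇑α)^[n])) = {1})
    (δ : H ≃ₗᵢ[ℂ] H)
    (hintertwine : ∀ (γ : Γ) (x : H), δ.symm ((π γ) (δ x)) = (π (α γ)) x)
    (hvanish : ∀ w : H,
      Filter.Tendsto (fun γ : Γ => (inner ℂ ((π γ) w) w : ℂ)) Filter.cofinite (nhds 0))
    (v : H) (hv : v ≠ 0) (lam : ℂ) (heig : δ v = lam • v) :
    ∀ γ : Γ, γ ≠ 1 → (inner ℂ ((π γ) v) v : ℂ) = 0 := by
  intro γ hγ
  by_contra hne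
  have hlam : ‖lam‖ = 1 :=
    δ.toLinearIsometry.norm_eq_one_of_apply_eq_smul (norm_ne_zero_iff.2 hv) heig
  have hinvariant : ∀ σ, inner ℂ (π (α σ) v) v = inner ℂ (π σ v) v := fun σ => by
    rw [← hintertwine, δ.inner_symm_apply_apply_eq (π σ) hlam heig]
  have hperiodic : γ ∈ periodicPts α :=
    hinj.mem_periodicPts_of_not_injective_iterate
      (not_injective_iterate_of_tendsto_cofinite (hvanish v) hinvariant hne)
  have hmem : γ ∈ ⋂ n, Set.range (⇑α)^[n] := periodicPts_subset_iInter_range_iterate hperiodic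
  rw [hcap] at hmem
  exact hγ hmem

/-- If `δ` intertwines a unitary representation `π` of a countable abelian group `Γ`
with its composition with an injective endomorphism `α` satisfying
`⋂ n, range αⁿ = {1}`, if the matrix coefficients `γ ↦ ⟪π γ w, w⟫` vanish at
infinity for every `w`, and if `v` is an eigenvector of `δ`, then the vectors
`π γ v` are pairwise orthogonal: `⟪π γ v, v⟫ = 0` for all `γ ≠ 1`. -/
theorem stmt_8 {H : Type*} [NormedAddCommGroup H] [InnerProductSpace ℂ H]
    [CompleteSpace H] {Γ : Type*} [CommGroup Γ] [Countable Γ]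
    (π : Γ →* (H ≃ₗᵢ[ℂ] H)) (α : Γ →* Γ) (hinj : Function.Injective α)
    (hcap : (⋂ n : ℕ, Set.range ((⇑α)^[n])) = {1})
    (δ : H ≃ₗᵢ[ℂ] H)
    (hintertwine : ∀ (γ : Γ) (x : H), δ.symm ((π γ) (δ x)) = (π (α γ)) x)
    (hvanish : ∀ w : H,
      Filter.Tendsto (fun γ : Γ => (inner ℂ ((π γ) w) w : ℂ)) Filter.cofinite (nhds 0))
    (v : H) (hv : v ≠ 0) (lam : ℂ) (heig : δ v = lam • v) :
    ∀ γ : Γ, γ ≠ 1 → (inner ℂ ((π γ) v) v : ℂ) = 0 :=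
  stmt_8_general π α hinj hcap δ hintertwine hvanish v hv lam heig
end

section
/- Let {V_j}_{j∈ℤ} be a family of closed subspaces of a Hilbert space H with V_j ⊆ V_{j+1} and V_{j+1} = δ(V_j) for a unitary operator δ, and suppose ⋃ V_j is dense in H. If δ has an eigenvector v with eigenvalue λ, |λ| = 1, then v ∈ ⋂_{j} V_j; in particular ⋂_j V_j ≠ {0}. -/
/-!
The distance from the eigenvector `v` to `V j` does not depend on `j`: applying the isometry `δ`
carries `V j` onto `V (j + 1)` and `v` to `lam • v`, and multiplying by a scalar of modulus one
preserves both `V (j + 1)` and distances. A quantity that is constant in `j` and, by density of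
`⋃ j, V j`, eventually smaller than any `ε > 0`, must vanish, so `v` lies in every closed `V j`.
-/

open Metric
open scoped Pointwise

theorem Dense.exists_infDist_lt {α ι : Type*} [PseudoMetricSpace α] {s : ι → Set α}
    (hs : Dense (⋃ i, s i)) (x : α) {ε : ℝ} (hε : 0 < ε) : ∃ i, infDist x (s i) < ε := by
  obtain ⟨y, hy, hxy⟩ := Metric.mem_closure_iff.1 (hs x) ε hε
  obtain ⟨i, hyi⟩ := Set.mem_iUnion.1 hy
  exact ⟨i, (infDist_le_dist_of_mem hyi).trans_lt hxy⟩

namespace Submodule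

variable {𝕜 E : Type*} [NormedDivisionRing 𝕜] [SeminormedAddCommGroup E] [Module 𝕜 E]
  [NormSMulClass 𝕜 E]

theorem infDist_smul_of_ne_zero (p : Submodule 𝕜 E) {c : 𝕜} (hc : c ≠ 0) (x : E) :
    infDist (c • x) (p : Set E) = ‖c‖ * infDist x p := by
  have hp : c • (p : Set E) = p := by
    ext y
    rw [Set.mem_smul_set_iff_inv_smul_mem₀ hc, SetLike.mem_coe, SetLike.mem_coe,
      p.smul_mem_iff (inv_ne_zero hc)]
  rw [← infDist_smul₀ hc, hp]

theorem infDist_map_of_apply_eq_smul (δ : E ≃ₗᵢ[𝕜] E) (p : Submodule 𝕜 E)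
    {v : E} {c : 𝕜} (hc : ‖c‖ = 1) (hv : δ v = c • v) :
    infDist v (p.map (δ.toLinearEquiv : E →ₗ[𝕜] E)) = infDist v p := by
  have hc0 : c ≠ 0 := norm_ne_zero_iff.1 (hc.symm ▸ one_ne_zero)
  calc infDist v (p.map (δ.toLinearEquiv : E →ₗ[𝕜] E))
      = ‖c‖ * infDist v (p.map (δ.toLinearEquiv : E →ₗ[𝕜] E)) := by rw [hc, one_mul]
    _ = infDist (δ v) (δ '' p) := by rw [← infDist_smul_of_ne_zero _ hc0, hv]; rfl
    _ = infDist v p := infDist_image δ.isometry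

theorem mem_of_dense_iUnion_of_apply_eq_smul (V : ℤ → Submodule 𝕜 E)
    (hclosed : ∀ j, IsClosed (V j : Set E)) (δ : E ≃ₗᵢ[𝕜] E)
    (hdil : ∀ j, V (j + 1) = (V j).map (δ.toLinearEquiv : E →ₗ[𝕜] E))
    (hdense : Dense (⋃ j, (V j : Set E))) {v : E} {c : 𝕜} (hc : ‖c‖ = 1)
    (hv : δ v = c • v) (j : ℤ) : v ∈ V j := by
  set d : ℤ → ℝ := fun j => infDist v (V j)
  have hperiodic : Function.Periodic d 1 := fun j => by
    simp only [d, hdil, infDist_map_of_apply_eq_smul δ _ hc hv]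
  have hconst : ∀ j, d j = d 0 := fun j => by simpa using hperiodic.int_mul_eq j
  have hzero : d 0 = 0 := by
    refine le_antisymm (le_of_forall_pos_lt_add fun ε hε => ?_) infDist_nonneg
    obtain ⟨i, hi⟩ := hdense.exists_infDist_lt v hε
    rw [← hconst i, zero_add]
    exact hi
  rw [← SetLike.mem_coe, (hclosed j).mem_iff_infDist_zero ⟨0, (V j).zero_mem⟩]
  exact (hconst j).trans hzero

end Submodule

theorem stmt_9_general {H : Type*} [NormedAddCommGroup H] [InnerProductSpace ℂ H]
    (V : ℤ → Submodule ℂ H)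
    (hclosed : ∀ j, IsClosed (V j : Set H))
    (δ : H ≃ₗᵢ[ℂ] H)
    (hdil : ∀ j, V (j + 1) = (V j).map (δ.toLinearEquiv : H →ₗ[ℂ] H))
    (hdense : Dense (⋃ j : ℤ, (V j : Set H)))
    (v : H) (hv : v ≠ 0) (lam : ℂ) (hlam : ‖lam‖ = 1) (heig : δ v = lam • v) :
    (∀ j : ℤ, v ∈ V j) ∧ (⋂ j : ℤ, (V j : Set H)) ≠ {0} := by
  have hmem : ∀ j, v ∈ V j :=
    Submodule.mem_of_dense_iUnion_of_apply_eq_smul V hclosed δ hdil hdense hlam heig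
  refine ⟨hmem, fun h => hv ?_⟩
  simpa [h] using Set.mem_iInter.2 hmem

/-- If `{V j}` is a nested family of closed subspaces of a Hilbert space with
`δ(V j) = V (j+1)` for a unitary `δ` and dense union, and `v` is an eigenvector
of `δ` with eigenvalue of modulus one, then `v` lies in every `V j`; in particular
the intersection `⋂ j, V j` is not `{0}`. -/
theorem stmt_9 {H : Type*} [NormedAddCommGroup H] [InnerProductSpace ℂ H]
    [CompleteSpace H] (V : ℤ → Submodule ℂ H)
    (hclosed : ∀ j, IsClosed (V j : Set H))
    (hnested : ∀ j, V j ≤ V (j + 1))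
    (δ : H ≃ₗᵢ[ℂ] H)
    (hdil : ∀ j, V (j + 1) = (V j).map (δ.toLinearEquiv : H →ₗ[ℂ] H))
    (hdense : Dense (⋃ j : ℤ, (V j : Set H)))
    (v : H) (hv : v ≠ 0) (lam : ℂ) (hlam : ‖lam‖ = 1) (heig : δ v = lam • v) :
    (∀ j : ℤ, v ∈ V j) ∧ (⋂ j : ℤ, (V j : Set H)) ≠ {0} :=
  stmt_9_general V hclosed δ hdil hdense v hv lam hlam heig
end

section
/- Let H be a Hilbert space, δ a unitary operator on H, and {ψ_{i,j,γ}} a family of vectors of the form δ^j(π_γ(ψ_i)) forming a frame for H, where π is a unitary representation of a group Γ and the index j ranges over ℤ. If v is an eigenvector of δ with |eigenvalue| = 1, then v = 0. In particular, δ has no (nonzero) eigenvector. -/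
/-!
If `δ v = λ v` with `|λ| = 1`, then `⟪v, δ^j w⟫ = ⟪δ^(-j) v, w⟫ = conj(λ^(-j)) ⟪v, w⟫`, so the frame
coefficients of `v` do not depend on `j ∈ ℤ`. A `tsum` that is constant along an infinite factor
of the index set vanishes (a nonzero constant is not summable, and a non-summable `tsum` is `0`
by convention), so the lower frame bound forces `A ‖v‖² ≤ 0`, i.e. `v = 0`.
-/

namespace LinearIsometryEquiv

variable {𝕜 E : Type*} [RCLike 𝕜] [SeminormedAddCommGroup E] [NormedSpace 𝕜 E]
  {f : E ≃ₗᵢ[𝕜] E} {c : 𝕜} {v : E}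

theorem pow_apply_of_apply_eq_smul (h : f v = c • v) (n : ℕ) : (f ^ n) v = c ^ n • v := by
  induction n with
  | zero => simp
  | succ n ih =>
    rw [pow_succ', coe_mul, Function.comp_apply, ih, map_smul, h, smul_smul, ← pow_succ]

theorem inv_apply_of_apply_eq_smul (hc : c ≠ 0) (h : f v = c • v) : f⁻¹ v = c⁻¹ • v := by
  rw [coe_inv, symm_apply_eq, map_smul, h, smul_smul, inv_mul_cancel₀ hc, one_smul]

theorem zpow_apply_of_apply_eq_smul (hc : c ≠ 0) (h : f v = c • v) (j : ℤ) :
    (f ^ j) v = c ^ j • v := by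
  cases j with
  | ofNat n =>
    rw [Int.ofNat_eq_natCast, zpow_natCast, zpow_natCast]
    exact pow_apply_of_apply_eq_smul h n
  | negSucc n =>
    rw [zpow_negSucc, zpow_negSucc, ← inv_pow, ← inv_pow]
    exact pow_apply_of_apply_eq_smul (inv_apply_of_apply_eq_smul hc h) _

end LinearIsometryEquiv

open LinearIsometryEquiv in
theorem norm_inner_zpow_apply_of_apply_eq_smul {𝕜 E : Type*} [RCLike 𝕜] [NormedAddCommGroup E]
    [InnerProductSpace 𝕜 E] {f : E ≃ₗᵢ[𝕜] E} {c : 𝕜} {v : E}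
    (hc : ‖c‖ = 1) (h : f v = c • v) (j : ℤ) (w : E) :
    ‖inner 𝕜 v ((f ^ j) w)‖ = ‖inner 𝕜 v w‖ := by
  have hc₀ : c ≠ 0 := norm_ne_zero_iff.mp (hc ▸ one_ne_zero)
  conv_lhs => rw [← (f ^ j).apply_symm_apply v, inner_map_map, ← coe_inv, ← zpow_neg,
    zpow_apply_of_apply_eq_smul hc₀ h, inner_smul_left, norm_mul, RCLike.norm_conj, norm_zpow,
    hc, one_zpow, one_mul]

theorem tsum_eq_zero_of_eq_comp_snd {β α G : Type*} [Infinite β] [AddCommGroup G]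
    [UniformSpace G] [IsUniformAddGroup G] [CompleteSpace G] [T2Space G]
    {f : β × α → G} (g : α → G) (hf : ∀ p, f p = g p.2) : ∑' p, f p = 0 := by
  by_cases hs : Summable f
  · have hg : ∀ a, g a = 0 := fun a ↦ by
      rw [← summable_const_iff (β := β)]
      simpa [hf] using hs.prod_symm.prod_factor a
    simp [hf, hg]
  · exact tsum_eq_zero_of_not_summable hs

theorem stmt_10_general {H : Type*} [NormedAddCommGroup H] [InnerProductSpace ℂ H]
    {Γ I : Type*}
    (δ : H ≃ₗᵢ[ℂ] H) (π : Γ → (H ≃ₗᵢ[ℂ] H)) (ψ : I → H)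
    (A B : ℝ) (hA : 0 < A)
    (hframe : ∀ v : H,
      A * ‖v‖ ^ 2 ≤
        (∑' p : ℤ × Γ × I,
          ‖(inner ℂ v ((δ ^ p.1) ((π p.2.1) (ψ p.2.2))) : ℂ)‖ ^ 2) ∧
        (∑' p : ℤ × Γ × I,
          ‖(inner ℂ v ((δ ^ p.1) ((π p.2.1) (ψ p.2.2))) : ℂ)‖ ^ 2) ≤ B * ‖v‖ ^ 2)
    (v : H) (lam : ℂ) (hlam : ‖lam‖ = 1) (heig : δ v = lam • v) :
    v = 0 := by
  have hsum_zero : ∑' p : ℤ × Γ × I,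
      ‖(inner ℂ v ((δ ^ p.1) ((π p.2.1) (ψ p.2.2))) : ℂ)‖ ^ 2 = 0 :=
    tsum_eq_zero_of_eq_comp_snd (fun q : Γ × I ↦ ‖(inner ℂ v ((π q.1) (ψ q.2)) : ℂ)‖ ^ 2)
      fun p ↦ by rw [norm_inner_zpow_apply_of_apply_eq_smul hlam heig]
  have hnorm : A * ‖v‖ ^ 2 ≤ 0 := hsum_zero ▸ (hframe v).1
  have hnorm_sq : ‖v‖ ^ 2 ≤ 0 := nonpos_of_mul_nonpos_right hnorm hA
  simpa using le_antisymm hnorm_sq (sq_nonneg ‖v‖)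

/-- If the family `{δ^j (π γ (ψ i))}` (with `j ∈ ℤ`) is a frame for a Hilbert
space `H`, where `δ` and all `π γ` are unitary, then any eigenvector of `δ` with
eigenvalue of modulus one is zero; in particular `δ` has no nonzero eigenvector. -/
theorem stmt_10 {H : Type*} [NormedAddCommGroup H] [InnerProductSpace ℂ H]
    [CompleteSpace H] {Γ I : Type*} [Countable Γ] [Countable I]
    (δ : H ≃ₗᵢ[ℂ] H) (π : Γ → (H ≃ₗᵢ[ℂ] H)) (ψ : I → H)
    (A B : ℝ) (hA : 0 < A) (hAB : A ≤ B)
    (hframe : ∀ v : H,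
      A * ‖v‖ ^ 2 ≤
        (∑' p : ℤ × Γ × I,
          ‖(inner ℂ v ((δ ^ p.1) ((π p.2.1) (ψ p.2.2))) : ℂ)‖ ^ 2) ∧
        (∑' p : ℤ × Γ × I,
          ‖(inner ℂ v ((δ ^ p.1) ((π p.2.1) (ψ p.2.2))) : ℂ)‖ ^ 2) ≤ B * ‖v‖ ^ 2)
    (v : H) (lam : ℂ) (hlam : ‖lam‖ = 1) (heig : δ v = lam • v) :
    v = 0 :=
  stmt_10_general δ π ψ A B hA hframe v lam hlam heig
end

section
/- Let π be a unitary representation of a countable abelian group Γ on a Hilbert space H, and δ a unitary on H with δ⁻¹ π_γ δ = π_{α(γ)}. Define π̃ on G = D ⋊ ℤ (D the direct limit of (Γ, α)) by π̃_{([γ,k], j)} = δ^k π_γ δ^{−k−j}. Then π̃ is a well-defined unitary representation of G, satisfying π̃_{α̃(d)} = δ⁻¹ π̃_d δ and π̃_{(d,j)} = π̃_d δ^{−j}. -/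
/-!
Since `π_{α^m γ} = δ^{-m} π_γ δ^m`, the formula `δ^k π_γ δ^{-k}` takes the same value on
all representatives `(γ, k)` of a point of the direct limit `D` and so defines a homomorphism
`P : D → U(H)` with `P ∘ α̃ = δ⁻¹ P δ`. Then `(d, j) ↦ P d δ^{-j}` is multiplicative for the
semidirect product law, because `δ^{-j}` conjugates `P d` to `P (α̃^j d)`.
-/

section Conjugation

variable {Γ D M : Type*} [Group M]

theorem apply_iterate_eq_zpow_mul_mul_zpow {α : Γ → Γ} {π : Γ → M} {δ : M}
    (hcomm : ∀ γ, π (α γ) = δ⁻¹ * π γ * δ) (m : ℕ) (γ : Γ) :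
    π (α^[m] γ) = δ ^ (-(m : ℤ)) * π γ * δ ^ (m : ℤ) := by
  induction m generalizing γ with
  | zero => simp
  | succ m ih =>
    rw [Function.iterate_succ_apply, ih, hcomm]
    push_cast
    rw [neg_add, zpow_add, zpow_add]
    group

theorem apply_zpow_eq_zpow_mul_mul_zpow [Mul D] {a : D ≃* D} {P : D → M} {δ : M}
    (ha : ∀ d, P (a d) = δ⁻¹ * P d * δ) (n : ℤ) (d : D) :
    P ((a ^ n) d) = δ ^ (-n) * P d * δ ^ n := by
  have ha_inv : ∀ d, P (a⁻¹ d) = δ * P d * δ⁻¹ := fun d => by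
    have := ha (a⁻¹ d)
    rw [MulAut.inv_apply, MulEquiv.apply_symm_apply] at this
    rw [MulAut.inv_apply, this]
    group
  induction n using Int.induction_on generalizing d with
  | zero => simp
  | succ n ih =>
    rw [zpow_add_one, MulAut.mul_apply, ih, ha, neg_add, zpow_add, zpow_add]
    group
  | pred n ih =>
    rw [zpow_sub_one, MulAut.mul_apply, ih, ha_inv, neg_sub', zpow_sub, zpow_sub_one]
    group

end Conjugation

section DirectLimit

variable {Γ D M : Type*} {α : Γ → Γ} {e : Γ → ℕ → D}

theorem eq_iterate_add_of_eq_iff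
    (he_inj : ∀ γ k γ' k', e γ k = e γ' k' ↔ α^[k'] γ = α^[k] γ') (γ : Γ) (k m : ℕ) :
    e γ k = e (α^[m] γ) (k + m) := by
  rw [he_inj, ← Function.iterate_add_apply, add_comm]

variable [Mul Γ] [MulOneClass D] [Group M]

theorem exists_monoidHom_apply_eq
    (he_hom : ∀ γ γ' k, e (γ * γ') k = e γ k * e γ' k)
    (he_surj : ∀ d, ∃ γ k, d = e γ k)
    (he_inj : ∀ γ k γ' k', e γ k = e γ' k' ↔ α^[k'] γ = α^[k] γ')
    (Q : Γ → ℕ → M) (hQ_mul : ∀ γ γ' k, Q (γ * γ') k = Q γ k * Q γ' k)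
    (hQ_shift : ∀ γ k m, Q (α^[m] γ) (k + m) = Q γ k) :
    ∃ P : D →* M, ∀ γ k, P (e γ k) = Q γ k := by
  choose γf kf hd using he_surj
  have hQ_rep : ∀ γ k, Q (γf (e γ k)) (kf (e γ k)) = Q γ k := by
    intro γ k
    have h := (he_inj _ _ _ _).1 (hd (e γ k)).symm
    rw [← hQ_shift _ _ k, ← hQ_shift γ k (kf (e γ k)), h, add_comm]
  refine ⟨MonoidHom.mk' (fun d => Q (γf d) (kf d)) fun d₁ d₂ => ?_, hQ_rep⟩
  obtain ⟨γ₁, k₁, rfl⟩ : ∃ γ k, d₁ = e γ k := ⟨_, _, hd d₁⟩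
  obtain ⟨γ₂, k₂, rfl⟩ : ∃ γ k, d₂ = e γ k := ⟨_, _, hd d₂⟩
  have h_common : e γ₁ k₁ * e γ₂ k₂ = e (α^[k₂] γ₁ * α^[k₁] γ₂) (k₁ + k₂) := by
    rw [he_hom, ← eq_iterate_add_of_eq_iff he_inj, add_comm, ← eq_iterate_add_of_eq_iff he_inj]
  simp only [h_common, hQ_rep, hQ_mul]
  rw [hQ_shift, add_comm, hQ_shift]

end DirectLimit

theorem stmt_15_general {H : Type*} [NormedAddCommGroup H] [InnerProductSpace ℂ H]
    {Γ : Type*} [CommGroup Γ]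
    {D : Type*} [CommGroup D]
    (α : Γ →* Γ)
    (e : Γ → ℕ → D)
    (he_hom : ∀ (γ γ' : Γ) (k : ℕ), e (γ * γ') k = e γ k * e γ' k)
    (he_surj : ∀ d : D, ∃ (γ : Γ) (k : ℕ), d = e γ k)
    (he_inj : ∀ (γ : Γ) (k : ℕ) (γ' : Γ) (k' : ℕ),
      e γ k = e γ' k' ↔ (⇑α)^[k'] γ = (⇑α)^[k] γ')
    (atil : D ≃* D) (hatil : ∀ (γ : Γ) (k : ℕ), atil (e γ k) = e (α γ) k)
    (π : Γ →* (H ≃ₗᵢ[ℂ] H)) (δ : H ≃ₗᵢ[ℂ] H)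
    (hcomm : ∀ γ : Γ, π (α γ) = δ⁻¹ * π γ * δ) :
    ∃ pit : D × ℤ → (H ≃ₗᵢ[ℂ] H),
      (∀ (γ : Γ) (k : ℕ) (j : ℤ),
        pit (e γ k, j) = δ ^ (k : ℤ) * π γ * δ ^ (-(k : ℤ) - j)) ∧
      (∀ (d₁ d₂ : D) (j₁ j₂ : ℤ),
        pit (d₁ * (atil ^ j₁) d₂, j₁ + j₂) = pit (d₁, j₁) * pit (d₂, j₂)) ∧
      (∀ d : D, pit (atil d, 0) = δ⁻¹ * pit (d, 0) * δ) ∧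
      (∀ (d : D) (j : ℤ), pit (d, j) = pit (d, 0) * δ ^ (-j)) := by
  have hQ_shift : ∀ γ (k m : ℕ), MulAut.conj (δ ^ ((k + m : ℕ) : ℤ)) (π (α^[m] γ)) =
      MulAut.conj (δ ^ (k : ℤ)) (π γ) := by
    intro γ k m
    rw [MulAut.conj_apply, MulAut.conj_apply, apply_iterate_eq_zpow_mul_mul_zpow hcomm]
    push_cast
    rw [zpow_add]
    group
  obtain ⟨P, hPe⟩ := exists_monoidHom_apply_eq he_hom he_surj he_inj
    (fun γ k => MulAut.conj (δ ^ (k : ℤ)) (π γ)) (fun γ γ' k => by simp) hQ_shift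
  have hPa : ∀ d, P (atil d) = δ⁻¹ * P d * δ := by
    intro d
    obtain ⟨γ, k, rfl⟩ := he_surj d
    simp only [hatil, hPe, MulAut.conj_apply, hcomm]
    group
  refine ⟨fun p => P p.1 * δ ^ (-p.2), fun γ k j => ?_, fun d₁ d₂ j₁ j₂ => ?_,
    fun d => ?_, fun d j => by simp⟩
  · simp only [hPe, MulAut.conj_apply]
    group
  · simp only [map_mul, apply_zpow_eq_zpow_mul_mul_zpow hPa]
    group
  · simp only [hPa]
    group

/-- Let `D` be the direct limit of a countable abelian group `Γ` along an injective
endomorphism `α` (presented by maps `e γ k = [γ, k]` with the usual relations), with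
induced automorphism `α̃([γ,k]) = [α(γ),k]`.  Given a unitary representation `π` of
`Γ` on a Hilbert space and a unitary `δ` with `δ⁻¹ π_γ δ = π_{α(γ)}`, the formula
`π̃_{([γ,k],j)} = δ^k π_γ δ^{-k-j}` gives a well-defined unitary representation of
`G = D ⋊ ℤ` satisfying `π̃_{α̃(d)} = δ⁻¹ π̃_d δ` and `π̃_{(d,j)} = π̃_d δ^{-j}`. -/
theorem stmt_15 {H : Type*} [NormedAddCommGroup H] [InnerProductSpace ℂ H]
    [CompleteSpace H] {Γ : Type*} [CommGroup Γ] [Countable Γ]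
    {D : Type*} [CommGroup D]
    (α : Γ →* Γ) (hinj : Function.Injective α)
    (e : Γ → ℕ → D)
    (he_hom : ∀ (γ γ' : Γ) (k : ℕ), e (γ * γ') k = e γ k * e γ' k)
    (he_shift : ∀ (γ : Γ) (k : ℕ), e γ k = e (α γ) (k + 1))
    (he_surj : ∀ d : D, ∃ (γ : Γ) (k : ℕ), d = e γ k)
    (he_inj : ∀ (γ : Γ) (k : ℕ) (γ' : Γ) (k' : ℕ),
      e γ k = e γ' k' ↔ (⇑α)^[k'] γ = (⇑α)^[k] γ')
    (atil : D ≃* D) (hatil : ∀ (γ : Γ) (k : ℕ), atil (e γ k) = e (α γ) k)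
    (π : Γ →* (H ≃ₗᵢ[ℂ] H)) (δ : H ≃ₗᵢ[ℂ] H)
    (hcomm : ∀ γ : Γ, π (α γ) = δ⁻¹ * π γ * δ) :
    ∃ pit : D × ℤ → (H ≃ₗᵢ[ℂ] H),
      (∀ (γ : Γ) (k : ℕ) (j : ℤ),
        pit (e γ k, j) = δ ^ (k : ℤ) * π γ * δ ^ (-(k : ℤ) - j)) ∧
      (∀ (d₁ d₂ : D) (j₁ j₂ : ℤ),
        pit (d₁ * (atil ^ j₁) d₂, j₁ + j₂) = pit (d₁, j₁) * pit (d₂, j₂)) ∧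
      (∀ d : D, pit (atil d, 0) = δ⁻¹ * pit (d, 0) * δ) ∧
      (∀ (d : D) (j : ℤ), pit (d, j) = pit (d, 0) * δ ^ (-j)) :=
  stmt_15_general α e he_hom he_surj he_inj atil hatil π δ hcomm
end

section
/- Let h : 𝕋 → ℂ be measurable with |h(z)|² + |h(−z)|² = 2 a.e., and suppose there exist δ > 0, 0 < ε < min(1/8, δ/8), and a Borel set F ⊆ 𝕋 of positive measure with F ∩ {z² : z ∈ F} of positive measure, such that |h(z)| ≥ 1 + δ for all z ∈ F. Suppose further that S_h (the Ruelle operator (S_h f)(z) = h(z)f(z²)) has a unit eigenvector f with |f(z)| = 1 a.e. and eigenvalue λ, |λ| = 1. Then a contradiction follows; hence under these hypotheses S_h has no eigenvector of modulus-one eigenvalue with |f| = 1 a.e. -/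
open MeasureTheory

theorem ae_norm_eq_one_of_mul_eq_mul_comp {α 𝕜 : Type*} [MeasurableSpace α]
    [NormedDivisionRing 𝕜] {μ : Measure α} {T : α → α}
    (hT : Measure.QuasiMeasurePreserving T μ μ) {h f : α → 𝕜} {c : 𝕜} (hc : ‖c‖ = 1)
    (hf : ∀ᵐ x ∂μ, ‖f x‖ = 1) (heig : ∀ᵐ x ∂μ, c * f x = h x * f (T x)) :
    ∀ᵐ x ∂μ, ‖h x‖ = 1 := by
  filter_upwards [heig, hf, hT.ae hf] with x hx hfx hfTx
  simpa [norm_mul, hc, hfx, hfTx] using congrArg norm hx.symm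

theorem stmt_17_general (h : AddCircle (1 : ℝ) → ℂ)
    (δ : ℝ) (hδ : 0 < δ)
    (F : Set (AddCircle (1 : ℝ))) (hFpos : 0 < volume F)
    (hlow : ∀ z ∈ F, 1 + δ ≤ ‖h z‖)
    (f : AddCircle (1 : ℝ) → ℂ)
    (hfnorm : ∀ᵐ z : AddCircle (1 : ℝ), ‖f z‖ = 1)
    (lam : ℂ) (hlam : ‖lam‖ = 1)
    (heig : ∀ᵐ z : AddCircle (1 : ℝ), lam * f z = h z * f ((2 : ℕ) • z)) :
    False := by
  have hdoubling : MeasurePreserving (fun z : AddCircle (1 : ℝ) => (2 : ℕ) • z) :=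
    (AddCircle.ergodic_nsmul one_lt_two).toMeasurePreserving
  have hunimodular : ∀ᵐ z : AddCircle (1 : ℝ), ‖h z‖ = 1 :=
    ae_norm_eq_one_of_mul_eq_mul_comp hdoubling.quasiMeasurePreserving hlam hfnorm heig
  obtain ⟨z, hzF, hz⟩ :=
    Measure.exists_mem_of_measure_ne_zero_of_ae hFpos.ne' (ae_restrict_of_ae hunimodular)
  linarith [hlow z hzF]

/-- Low-pass contradiction (1×1 case): if `h` is a quadrature mirror filter on
`𝕋` with `|h| ≥ 1 + δ` on a set `F` of positive measure with `F ∩ α*(F)` of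
positive measure (`α*` being the squaring/doubling map), then the Ruelle operator
`S_h f (z) = h z f (z²)` cannot have a unit eigenvector `f` with `|f| = 1` a.e.
and eigenvalue of modulus one. -/
theorem stmt_17 (h : AddCircle (1 : ℝ) → ℂ) (hmeas : Measurable h)
    (hfilter : ∀ᵐ z : AddCircle (1 : ℝ),
      ‖h z‖ ^ 2 + ‖h (z + (((1 : ℝ) / 2 : ℝ) : AddCircle (1 : ℝ)))‖ ^ 2 = 2)
    (δ : ℝ) (hδ : 0 < δ) (ε : ℝ) (hε : 0 < ε) (hε' : ε < min (1 / 8) (δ / 8))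
    (F : Set (AddCircle (1 : ℝ))) (hF : MeasurableSet F) (hFpos : 0 < volume F)
    (hFF : 0 < volume (F ∩ ((fun z : AddCircle (1 : ℝ) => (2 : ℕ) • z) '' F)))
    (hlow : ∀ z ∈ F, 1 + δ ≤ ‖h z‖)
    (f : AddCircle (1 : ℝ) → ℂ) (hfmeas : Measurable f)
    (hfnorm : ∀ᵐ z : AddCircle (1 : ℝ), ‖f z‖ = 1)
    (lam : ℂ) (hlam : ‖lam‖ = 1)
    (heig : ∀ᵐ z : AddCircle (1 : ℝ), lam * f z = h z * f ((2 : ℕ) • z)) :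
    False :=
  stmt_17_general h δ hδ F hFpos hlow f hfnorm lam hlam heig
end

section
/- Let h : 𝕋 → ℂ be essentially bounded and satisfy |h(z)|² + |h(−z)|² = 2 a.e. Then for every n ≥ 1 and almost every ω ∈ 𝕋: (1/2ⁿ) Σ_{ζ : ζ^{2ⁿ} = 1} |h(ωζ) h((ωζ)²) ⋯ h((ωζ)^{2^{n−1}})|² = 1. -/
/-!
Writing `S_n(ω)` for the sum over the `2ⁿ`-th roots of unity, the roots of order `2ⁿ⁺¹` pair up as
`±ζ` above the roots of order `2ⁿ`: in each pair the first factors `|h(±ωζ)|²` sum to `2` by the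
filter equation, and the remaining factors only depend on `(ωζ)²`. Hence `S_{n+1}(ω) = 2 S_n(ω²)`,
and since squaring preserves Haar measure on `𝕋`, `S_n = 2ⁿ` a.e. follows by induction.
-/

open MeasureTheory Finset

/-- For `j < 2ⁿ`, the `2ⁿ`-th roots of unity written additively in `ℝ/ℤ`. -/
noncomputable def dyadicPoint (n j : ℕ) : AddCircle (1 : ℝ) := ((j : ℝ) / 2 ^ n : ℝ)

lemma dyadicPoint_two_pow_add (n i : ℕ) : dyadicPoint n (2 ^ n + i) = dyadicPoint n i := by
  have : ((2 ^ n + i : ℕ) : ℝ) / 2 ^ n = (i : ℝ) / 2 ^ n + 1 := by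
    push_cast; field_simp; ring
  rw [dyadicPoint, this, AddCircle.coe_add_period, dyadicPoint]

lemma dyadicPoint_succ_two_pow_add (n i : ℕ) :
    dyadicPoint (n + 1) (2 ^ n + i) =
      dyadicPoint (n + 1) i + (((1 : ℝ) / 2 : ℝ) : AddCircle (1 : ℝ)) := by
  have : ((2 ^ n + i : ℕ) : ℝ) / 2 ^ (n + 1) = (i : ℝ) / 2 ^ (n + 1) + 1 / 2 := by
    push_cast; rw [pow_succ]; field_simp; ring
  rw [dyadicPoint, this, AddCircle.coe_add, dyadicPoint]

lemma two_pow_succ_nsmul_add_dyadicPoint (ω : AddCircle (1 : ℝ)) (n j k : ℕ) :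
    (2 ^ (k + 1) : ℕ) • (ω + dyadicPoint (n + 1) j) =
      (2 ^ k : ℕ) • ((2 : ℕ) • ω + dyadicPoint n j) := by
  have : (2 : ℕ) • ((j : ℝ) / 2 ^ (n + 1)) = (j : ℝ) / 2 ^ n := by
    rw [pow_succ, nsmul_eq_mul]; push_cast; field_simp
  rw [pow_succ, mul_smul, smul_add, dyadicPoint, ← AddCircle.coe_nsmul, this, dyadicPoint]

/-- `∑_{ζ^{2ⁿ} = 1} w(ωζ) w((ωζ)²) ⋯ w((ωζ)^{2ⁿ⁻¹})`, in additive notation on `ℝ/ℤ`. -/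
noncomputable def orbitSum {R : Type*} [CommSemiring R] (w : AddCircle (1 : ℝ) → R) (n : ℕ)
    (ω : AddCircle (1 : ℝ)) : R :=
  ∑ j ∈ range (2 ^ n), ∏ k ∈ range n, w ((2 ^ k : ℕ) • (ω + dyadicPoint n j))

section

variable {R : Type*} [CommSemiring R] (w : AddCircle (1 : ℝ) → R)

lemma orbitSum_succ (n : ℕ) (ω : AddCircle (1 : ℝ))
    (hw : ∀ i, w (ω + dyadicPoint (n + 1) i) +
      w (ω + dyadicPoint (n + 1) i + (((1 : ℝ) / 2 : ℝ) : AddCircle (1 : ℝ))) = 2) :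
    orbitSum w (n + 1) ω = 2 * orbitSum w n ((2 : ℕ) • ω) := by
  have hterm : ∀ j, ∏ k ∈ range (n + 1), w ((2 ^ k : ℕ) • (ω + dyadicPoint (n + 1) j)) =
      w (ω + dyadicPoint (n + 1) j) *
        ∏ k ∈ range n, w ((2 ^ k : ℕ) • ((2 : ℕ) • ω + dyadicPoint n j)) := by
    intro j
    simp only [prod_range_succ', two_pow_succ_nsmul_add_dyadicPoint, pow_zero, one_smul]
    ring
  rw [orbitSum, orbitSum, pow_succ, mul_two, sum_range_add, ← sum_add_distrib, mul_sum]
  refine sum_congr rfl fun i _ => ?_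
  rw [hterm, hterm, dyadicPoint_two_pow_add, dyadicPoint_succ_two_pow_add, ← add_assoc,
    ← add_mul, hw]

lemma ae_orbitSum_eq_two_pow
    (hw : ∀ᵐ z : AddCircle (1 : ℝ), w z + w (z + (((1 : ℝ) / 2 : ℝ) : AddCircle (1 : ℝ))) = 2)
    (n : ℕ) : ∀ᵐ ω, orbitSum w n ω = 2 ^ n := by
  induction n with
  | zero => simp [orbitSum]
  | succ n ih =>
    have hdouble : MeasurePreserving (fun ω : AddCircle (1 : ℝ) => (2 : ℕ) • ω) volume volume :=
      (AddCircle.ergodic_nsmul one_lt_two).toMeasurePreserving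
    have htranslates : ∀ᵐ ω : AddCircle (1 : ℝ), ∀ i, w (ω + dyadicPoint (n + 1) i) +
        w (ω + dyadicPoint (n + 1) i + (((1 : ℝ) / 2 : ℝ) : AddCircle (1 : ℝ))) = 2 :=
      ae_all_iff.2 fun _ => (measurePreserving_add_right volume _).quasiMeasurePreserving.ae
        (p := fun z => w z + w (z + (((1 : ℝ) / 2 : ℝ) : AddCircle (1 : ℝ))) = 2) hw
    filter_upwards [hdouble.quasiMeasurePreserving.ae ih, htranslates] with ω hω hfilter
    rw [orbitSum_succ w n ω hfilter, hω, pow_succ, mul_comm]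

end

theorem stmt_19_general (h : AddCircle (1 : ℝ) → ℂ)
    (hfilter : ∀ᵐ z : AddCircle (1 : ℝ),
      ‖h z‖ ^ 2 + ‖h (z + (((1 : ℝ) / 2 : ℝ) : AddCircle (1 : ℝ)))‖ ^ 2 = 2) :
    ∀ n : ℕ, 1 ≤ n →
      ∀ᵐ ω : AddCircle (1 : ℝ),
        (1 : ℝ) / 2 ^ n *
          ∑ j ∈ Finset.range (2 ^ n),
            ‖∏ k ∈ Finset.range n,
              h ((2 ^ k : ℕ) •
                (ω + (((j : ℝ) / 2 ^ n : ℝ) : AddCircle (1 : ℝ))))‖ ^ 2 = 1 := by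
  intro n _
  filter_upwards [ae_orbitSum_eq_two_pow (fun z => ‖h z‖ ^ 2) hfilter n] with ω hω
  simp only [orbitSum, dyadicPoint] at hω
  simp only [norm_prod, ← prod_pow, hω]
  field_simp

/-- Iterated filter equation: if `h` is an essentially bounded quadrature mirror
filter on `𝕋`, then for every `n ≥ 1` and a.e. `ω`,
`(1/2ⁿ) Σ_{ζ^{2ⁿ}=1} |h(ωζ) h((ωζ)²) ⋯ h((ωζ)^{2^{n-1}})|² = 1`,
where the `2ⁿ`-th roots of unity are enumerated as `j/2ⁿ`, `0 ≤ j < 2ⁿ`. -/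
theorem stmt_19 (h : AddCircle (1 : ℝ) → ℂ) (hmeas : Measurable h)
    (hbdd : ∃ C : ℝ, ∀ᵐ z, ‖h z‖ ≤ C)
    (hfilter : ∀ᵐ z : AddCircle (1 : ℝ),
      ‖h z‖ ^ 2 + ‖h (z + (((1 : ℝ) / 2 : ℝ) : AddCircle (1 : ℝ)))‖ ^ 2 = 2) :
    ∀ n : ℕ, 1 ≤ n →
      ∀ᵐ ω : AddCircle (1 : ℝ),
        (1 : ℝ) / 2 ^ n *
          ∑ j ∈ Finset.range (2 ^ n),
            ‖∏ k ∈ Finset.range n,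
              h ((2 ^ k : ℕ) •
                (ω + (((j : ℝ) / 2 ^ n : ℝ) : AddCircle (1 : ℝ))))‖ ^ 2 = 1 :=
  stmt_19_general h hfilter
end
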